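/- Abstract derivation relation (Theorem: Murahara): let Z : 𝔥¹ → R be a ℚ-linear map into a commutative ℚ-algebra R satisfying (i) Z(w ∗ w') = Z(w)Z(w'), (ii) Z(φ(w)) = Z(w) with φ(x) = x+y, φ(y) = −y, and (iii) Z(x^{l-1}y) = 0 for all l ≥ 1. Then for every l ≥ 1 and every w ∈ 𝔥¹, Z(∂_l(w)) = −Z(z^{l-1}y·w), where ∂_l is the derivation of 𝔥 with ∂_l(x) = xz^{l-1}y, ∂_l(y) = −xz^{l-1}y and z = x+y. -/

import Mathlib

/-!
Conjugating `∂_l` by the involution `φ` gives `-E`, where `E` is the derivation with `E(x) = 0`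
and `E(y) = z x^{l-1} y`. On words `E(z_K) = z_l ∗ z_K - z_l z_K`, so the harmonic product rule
and `Z(z_l) = 0` give `Z(E v) = -Z(z_l v)` on `𝔥¹`, which is spanned by words. Duality carries
this back: `Z(∂_l w) = Z(φ ∂_l w) = -Z(E φ w) = Z(z_l φ w) = -Z(z^{l-1} y w)`.
-/


noncomputable section

/-- 𝔥 = ℚ⟨x,y⟩. -/
abbrev H : Type := FreeAlgebra ℚ (Fin 2)

/-- The generator x. -/
def Xg : H := FreeAlgebra.ι ℚ (0 : Fin 2)

/-- The generator y. -/
def Yg : H := FreeAlgebra.ι ℚ (1 : Fin 2)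

/-- z = x + y. -/
def Zg : H := Xg + Yg

/-- Membership in 𝔥¹ = ℚ + 𝔥y. -/
def MemH1 (a : H) : Prop := ∃ (q : ℚ) (h : H), a = algebraMap ℚ H q + h * Yg

/-- The word z_{k₁}⋯z_{k_d} ∈ 𝔥¹, where z_k = x^{k-1}y. -/
def zword (K : List ℕ+) : H := (K.map fun k => Xg ^ ((k : ℕ) - 1) * Yg).prod

/-- The harmonic product of two words of 𝔥¹, landing in 𝔥¹ ⊆ 𝔥. -/
def hmulF : List ℕ+ → List ℕ+ → H
  | [], L => zword L
  | K, [] => zword K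
  | k :: K, l :: L =>
      Xg ^ ((k : ℕ) - 1) * Yg * hmulF K (l :: L)
      + Xg ^ ((l : ℕ) - 1) * Yg * hmulF (k :: K) L
      + Xg ^ (((k : ℕ) + (l : ℕ)) - 1) * Yg * hmulF K L
termination_by K L => K.length + L.length

/-- The automorphism φ of ℚ⟨x,y⟩ with φ(x) = x + y and φ(y) = -y. -/
def phi : H →ₐ[ℚ] H := FreeAlgebra.lift ℚ (fun i : Fin 2 => if i = 0 then Xg + Yg else -Yg)

/-- The product z^{m₁-1}y ⋯ z^{m_s-1}y. -/
def zy (ms : List ℕ+) : H := (ms.map fun m => Zg ^ ((m : ℕ) - 1) * Yg).prod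

/-- The Leibniz rule for a possibly noncommutative algebra (Mathlib's `Derivation` needs a
commutative one). -/
def IsDerivation {R A : Type*} [CommSemiring R] [Semiring A] [Algebra R A] (D : A →ₗ[R] A) :
    Prop :=
  ∀ a b : A, D (a * b) = D a * b + a * D b

namespace IsDerivation

variable {R A : Type*} [CommSemiring R] [Ring A] [Algebra R A] {D : A →ₗ[R] A}

theorem map_one (hD : IsDerivation D) : D 1 = 0 := by
  have h := hD 1 1
  simp only [mul_one, one_mul] at h
  exact left_eq_add.mp h

theorem map_algebraMap (hD : IsDerivation D) (r : R) : D (algebraMap R A r) = 0 := by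
  rw [Algebra.algebraMap_eq_smul_one, map_smul, hD.map_one, smul_zero]

theorem map_pow_eq_zero (hD : IsDerivation D) {a : A} (ha : D a = 0) (n : ℕ) :
    D (a ^ n) = 0 := by
  induction n with
  | zero => rw [pow_zero]; exact hD.map_one
  | succ n ih => rw [pow_succ, hD, ih, ha, zero_mul, mul_zero, add_zero]

theorem neg (hD : IsDerivation D) : IsDerivation (-D) := fun a b => by
  simp only [LinearMap.neg_apply, hD a b, neg_add, neg_mul, mul_neg]

theorem conj (hD : IsDerivation D) (σ : A →ₐ[R] A) (hσ : ∀ a, σ (σ a) = a) :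
    IsDerivation (σ.toLinearMap ∘ₗ D ∘ₗ σ.toLinearMap) := fun a b => by
  simp only [LinearMap.comp_apply, AlgHom.toLinearMap_apply, map_mul, hD (σ a) (σ b), map_add,
    hσ]

end IsDerivation

theorem phi_Xg : phi Xg = Xg + Yg := by simp [phi, Xg, Yg]

theorem phi_Yg : phi Yg = -Yg := by simp [phi, Xg, Yg]

theorem phi_Zg : phi Zg = Xg := by simp [Zg, phi_Xg, phi_Yg]

theorem phi_phi (a : H) : phi (phi a) = a := by
  suffices phi.comp phi = AlgHom.id ℚ H from DFunLike.congr_fun this a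
  refine FreeAlgebra.hom_ext (funext fun i => ?_)
  fin_cases i
  · change phi (phi Xg) = Xg
    rw [phi_Xg, map_add, phi_Xg, phi_Yg, add_neg_cancel_right]
  · change phi (phi Yg) = Yg
    rw [phi_Yg, map_neg, phi_Yg, neg_neg]

namespace MemH1

theorem map_phi {w : H} (hw : MemH1 w) : MemH1 (phi w) := by
  obtain ⟨q, h, rfl⟩ := hw
  exact ⟨q, -phi h, by rw [map_add, map_mul, phi_Yg, AlgHom.commutes, mul_neg, neg_mul]⟩

theorem mul_Yg_mul (a : H) {w : H} (hw : MemH1 w) : MemH1 (a * Yg * w) := by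
  obtain ⟨q, h, rfl⟩ := hw
  refine ⟨0, algebraMap ℚ H q * a + a * Yg * h, ?_⟩
  rw [map_zero, zero_add, mul_add, ← Algebra.commutes q (a * Yg)]
  noncomm_ring

theorem map_of_isDerivation {D : H →ₗ[ℚ] H} (hD : IsDerivation D) {a : H}
    (hy : D Yg = a * Yg) {w : H} (hw : MemH1 w) : MemH1 (D w) := by
  obtain ⟨q, h, rfl⟩ := hw
  refine ⟨0, D h + h * a, ?_⟩
  rw [map_add, hD.map_algebraMap, hD, hy, map_zero]
  noncomm_ring

end MemH1

theorem zword_cons (k : ℕ+) (K : List ℕ+) :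
    zword (k :: K) = Xg ^ ((k : ℕ) - 1) * Yg * zword K := by
  simp [zword]

theorem zword_singleton (k : ℕ+) : zword [k] = Xg ^ ((k : ℕ) - 1) * Yg := by
  simp [zword]

theorem Xg_mul_zword_cons (k : ℕ+) (K : List ℕ+) :
    Xg * zword (k :: K) = zword ((k + 1) :: K) := by
  rw [zword_cons, zword_cons, ← mul_assoc, ← mul_assoc, ← pow_succ', PNat.add_coe,
    PNat.one_coe, Nat.sub_add_cancel k.pos, Nat.add_sub_cancel]

theorem Yg_mul_zword (K : List ℕ+) : Yg * zword K = zword (1 :: K) := by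
  rw [zword_cons, PNat.one_coe, Nat.sub_self, pow_zero, one_mul]

/-- The left ideal `𝔥y`, as the span of the nonempty words `z_{k₁}⋯z_{k_d}`. -/
def wordSpanY : Submodule ℚ H :=
  Submodule.span ℚ (Set.range fun p : ℕ+ × List ℕ+ => zword (p.1 :: p.2))

theorem zword_cons_mem_wordSpanY (k : ℕ+) (K : List ℕ+) : zword (k :: K) ∈ wordSpanY :=
  Submodule.subset_span ⟨(k, K), rfl⟩

theorem mul_mem_wordSpanY (h : H) {v : H} (hv : v ∈ wordSpanY) : h * v ∈ wordSpanY := by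
  induction h using FreeAlgebra.induction generalizing v with
  | grade0 q => rw [Algebra.algebraMap_eq_smul_one, smul_one_mul]; exact wordSpanY.smul_mem q hv
  | grade1 i =>
    induction hv using Submodule.span_induction with
    | mem _ hs =>
      obtain ⟨⟨k, K⟩, rfl⟩ := hs
      fin_cases i
      · exact (Xg_mul_zword_cons k K).symm ▸ zword_cons_mem_wordSpanY _ _
      · exact (Yg_mul_zword _).symm ▸ zword_cons_mem_wordSpanY _ _
    | zero => rw [mul_zero]; exact wordSpanY.zero_mem
    | add _ _ _ _ hs ht => rw [mul_add]; exact wordSpanY.add_mem hs ht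
    | smul q _ _ hs => rw [mul_smul_comm]; exact wordSpanY.smul_mem q hs
  | mul a b ha hb => rw [mul_assoc]; exact ha (hb hv)
  | add a b ha hb => rw [add_mul]; exact wordSpanY.add_mem (ha hv) (hb hv)

theorem MemH1.mem_span_zword {w : H} (hw : MemH1 w) :
    w ∈ Submodule.span ℚ (Set.range zword) := by
  obtain ⟨q, h, rfl⟩ := hw
  refine Submodule.add_mem _ ?_ ?_
  · rw [Algebra.algebraMap_eq_smul_one]
    exact Submodule.smul_mem _ q (Submodule.subset_span ⟨[], rfl⟩)
  · have hy : h * Yg ∈ wordSpanY := by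
      simpa [zword_singleton] using mul_mem_wordSpanY h (zword_cons_mem_wordSpanY 1 [])
    refine Submodule.span_le.mpr ?_ hy
    rintro _ ⟨⟨k, K⟩, rfl⟩
    exact Submodule.subset_span ⟨k :: K, rfl⟩

theorem hmulF_singleton_cons (l k : ℕ+) (K : List ℕ+) :
    hmulF [l] (k :: K) = zword [l] * zword (k :: K) + zword [k] * hmulF [l] K
      + Xg ^ ((l : ℕ) + k - 1) * Yg * zword K := by
  rw [hmulF, hmulF, hmulF, zword_singleton, zword_singleton, zword_cons, mul_assoc]

theorem IsDerivation.map_zword (l : ℕ+) {E : H →ₗ[ℚ] H} (hE : IsDerivation E)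
    (hx : E Xg = 0) (hy : E Yg = Zg * Xg ^ ((l : ℕ) - 1) * Yg) (K : List ℕ+) :
    E (zword K) = hmulF [l] K - zword [l] * zword K := by
  induction K with
  | nil => simp [zword, hmulF, hE.map_one]
  | cons k K ih =>
    have hzk : E (zword [k]) = Xg ^ ((l : ℕ) + k - 1) * Yg + zword [k] * zword [l] := by
      rw [zword_singleton, zword_singleton, hE, hE.map_pow_eq_zero hx, hy, Zg,
        show (l : ℕ) + k - 1 = (k - 1) + 1 + (l - 1) by have := l.pos; have := k.pos; omega,
        pow_add, pow_add, pow_one]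
      noncomm_ring
    rw [show zword (k :: K) = zword [k] * zword K by rw [zword_cons, zword_singleton], hE, hzk, ih,
      hmulF_singleton_cons, zword_cons k K, ← zword_singleton]
    noncomm_ring

theorem map_apply_eq_neg_map_zword_mul {R : Type*} [Ring R] [Algebra ℚ R] (Zm : H →ₗ[ℚ] R)
    (hharm : ∀ K L : List ℕ+, Zm (hmulF K L) = Zm (zword K) * Zm (zword L))
    (l : ℕ+) (hdepth1 : Zm (zword [l]) = 0) {E : H →ₗ[ℚ] H} (hE : IsDerivation E)
    (hx : E Xg = 0) (hy : E Yg = Zg * Xg ^ ((l : ℕ) - 1) * Yg) {v : H}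
    (hv : v ∈ Submodule.span ℚ (Set.range zword)) : Zm (E v) = -Zm (zword [l] * v) := by
  refine LinearMap.eqOn_span (f := Zm ∘ₗ E)
    (g := -(Zm ∘ₗ LinearMap.mulLeft ℚ (zword [l]))) ?_ hv
  rintro _ ⟨K, rfl⟩
  simp only [LinearMap.comp_apply, LinearMap.neg_apply, LinearMap.mulLeft_apply,
    IsDerivation.map_zword l hE hx hy, map_sub, hharm, hdepth1, zero_mul, zero_sub]

section Conjugation

variable {l : ℕ+} {D : H →ₗ[ℚ] H}

theorem neg_phi_apply_phi_Xg (hx : D Xg = Xg * Zg ^ ((l : ℕ) - 1) * Yg)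
    (hy : D Yg = -(Xg * Zg ^ ((l : ℕ) - 1) * Yg)) : -phi (D (phi Xg)) = 0 := by
  rw [phi_Xg, map_add, hx, hy, add_neg_cancel, map_zero, neg_zero]

theorem neg_phi_apply_phi_Yg (hy : D Yg = -(Xg * Zg ^ ((l : ℕ) - 1) * Yg)) :
    -phi (D (phi Yg)) = Zg * Xg ^ ((l : ℕ) - 1) * Yg := by
  rw [phi_Yg, map_neg, hy, neg_neg, map_mul, map_mul, map_pow, phi_Xg, phi_Zg, phi_Yg, Zg]
  noncomm_ring

end Conjugation

/-- Derivation relations for finite multiple zeta values (Murahara), abstract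
form: for any ℚ-linear Z : 𝔥¹ → R into a commutative ℚ-algebra satisfying the
harmonic product rule, duality Z∘φ = Z, and Z(x^{l-1}y) = 0 for all l ≥ 1, and
for the derivation ∂_l of 𝔥 with ∂_l(x) = xz^{l-1}y, ∂_l(y) = −xz^{l-1}y, one
has Z(∂_l(w)) = −Z(z^{l-1}y·w) for all w ∈ 𝔥¹. -/
theorem abstract_derivation_relation (R : Type*) [CommRing R] [Algebra ℚ R]
    (Zm : H →ₗ[ℚ] R)
    (hharm : ∀ K L : List ℕ+, Zm (hmulF K L) = Zm (zword K) * Zm (zword L))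
    (hdual : ∀ a : H, MemH1 a → Zm (phi a) = Zm a)
    (hdepth1 : ∀ l : ℕ+, Zm (Xg ^ ((l : ℕ) - 1) * Yg) = 0)
    (l : ℕ+) (D : H →ₗ[ℚ] H)
    (hD : ∀ a b : H, D (a * b) = D a * b + a * D b)
    (hx : D Xg = Xg * Zg ^ ((l : ℕ) - 1) * Yg)
    (hy : D Yg = -(Xg * Zg ^ ((l : ℕ) - 1) * Yg))
    (w : H) (hw : MemH1 w) :
    Zm (D w) = -(Zm (Zg ^ ((l : ℕ) - 1) * Yg * w)) := by
  have hD : IsDerivation D := hD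
  set E := -(phi.toLinearMap ∘ₗ D ∘ₗ phi.toLinearMap)
  have hE : IsDerivation E := (hD.conj phi phi_phi).neg
  have hDw : phi (D w) = -E (phi w) := by simp [E, phi_phi]
  have hzl : zword [l] * phi w = -phi (Zg ^ ((l : ℕ) - 1) * Yg * w) := by
    rw [zword_singleton, map_mul, map_mul, map_pow, phi_Zg, phi_Yg]
    noncomm_ring
  have hDy : D Yg = -(Xg * Zg ^ ((l : ℕ) - 1)) * Yg := by rw [hy, neg_mul]
  calc Zm (D w) = Zm (phi (D w)) := (hdual _ (hw.map_of_isDerivation hD hDy)).symm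
    _ = -Zm (E (phi w)) := by rw [hDw, map_neg]
    _ = Zm (zword [l] * phi w) := by
      rw [map_apply_eq_neg_map_zword_mul Zm hharm l (by rw [zword_singleton, hdepth1]) hE
        (neg_phi_apply_phi_Xg hx hy) (neg_phi_apply_phi_Yg hy) hw.map_phi.mem_span_zword, neg_neg]
    _ = -Zm (Zg ^ ((l : ℕ) - 1) * Yg * w) := by rw [hzl, map_neg, hdual _ (hw.mul_Yg_mul _)]

end
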